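/- The set of complex symmetric operators on an infinite-dimensional separable complex Hilbert space is not closed in the strong operator topology: with S the unilateral shift on ℓ²(ℕ) and Pₙ the orthogonal projection onto span{eᵢ : i ≥ n}, each Tₙ = PₙS ⊕ S* is complex symmetric, but the SOT-limit 0 ⊕ S* is not complex symmetric. -/

import Mathlib

noncomputable section

open ContinuousLinearMap Filter Topology

def IsConjugation {H : Type*} [NormedAddCommGroup H] [InnerProductSpace ℂ H]
    (C : H → H) : Prop :=
  (∀ x y, C (x + y) = C x + C y) ∧
  (∀ (a : ℂ) (x : H), C (a • x) = (starRingEnd ℂ) a • C x) ∧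
  (∀ x, C (C x) = x) ∧
  (∀ x y : H, (inner ℂ (C x) (C y) : ℂ) = inner ℂ y x)

def IsComplexSymmetric {H : Type*} [NormedAddCommGroup H] [InnerProductSpace ℂ H]
    [CompleteSpace H] (T : H →L[ℂ] H) : Prop :=
  ∃ C : H → H, IsConjugation C ∧ ∀ x, T x = C (adjoint T (C x))

/-- `ℓ²(ℕ)`. -/
abbrev ellTwo : Type := lp (fun _ : ℕ => ℂ) 2

/-- The standard basis vector `eₙ` of `ℓ²(ℕ)`. -/
def e (n : ℕ) : ellTwo := lp.single 2 n (1 : ℂ)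

/-!
Let `J` be coordinatewise conjugation on `ℓ²`. With `V = S ^ (n - 1)` one has `Pₙ S = V S V*`,
and the block operator `W = [[1 - V V*, V], [V*, 0]]` on `ℓ² ⊕ ℓ²` is a self-adjoint unitary
commuting with `J ⊕ J` and satisfying `W Tₙ* W = Tₙ`; as `Tₙ` also commutes with `J ⊕ J`,
`C = (J ⊕ J) W` is a conjugation with `C Tₙ* C = Tₙ`. The SOT convergence is `Pₙ y → 0`, the
vanishing of the tails of an `ℓ²` sequence. Finally, if `C T* C = T` then `C` carries `ker T²`
into `ker T*²` and `ker T*` into `ker T`, so `ker T*² = ker T*` forces `ker T² = ker T`. For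
`L = 0 ⊕ S*` the first holds (`S` is injective) but `(0, e₁)` lies in `ker L² \ ker L`.
-/

open scoped InnerProductSpace

namespace IsConjugation

variable {E : Type*} [NormedAddCommGroup E] [InnerProductSpace ℂ E] {J : E → E}

theorem map_zero (hJ : IsConjugation J) : J 0 = 0 :=
  (AddMonoidHom.mk' J hJ.1).map_zero

theorem map_sub (hJ : IsConjugation J) (x y : E) : J (x - y) = J x - J y :=
  (AddMonoidHom.mk' J hJ.1).map_sub x y

theorem eq_zero_of_apply_eq_zero (hJ : IsConjugation J) {x : E} (hx : J x = 0) : x = 0 := by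
  rw [← hJ.2.2.1 x, hx, hJ.map_zero]

theorem inner_apply_left (hJ : IsConjugation J) (x y : E) : ⟪J x, y⟫_ℂ = ⟪J y, x⟫_ℂ := by
  rw [← hJ.2.2.2 x (J y), hJ.2.2.1]

theorem adjoint_apply_comm [CompleteSpace E] (hJ : IsConjugation J) {A : E →L[ℂ] E}
    (hA : ∀ x, A (J x) = J (A x)) (x : E) : adjoint A (J x) = J (adjoint A x) :=
  ext_inner_right ℂ fun y => by
    rw [adjoint_inner_left, hJ.inner_apply_left, ← hA, ← adjoint_inner_right,
      hJ.inner_apply_left]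

theorem comp_isSelfAdjoint (hJ : IsConjugation J) [CompleteSpace E] {W : E →L[ℂ] E}
    (hW : IsSelfAdjoint W) (hWW : ∀ x, W (W x) = x) (hWJ : ∀ x, W (J x) = J (W x)) :
    IsConjugation (J ∘ W) := by
  refine ⟨fun x y => ?_, fun a x => ?_, fun x => ?_, fun x y => ?_⟩
  · simp only [Function.comp_apply, map_add, hJ.1]
  · simp only [Function.comp_apply, map_smul, hJ.2.1]
  · simp only [Function.comp_apply, hWJ, hJ.2.2.1, hWW]
  · rw [Function.comp_apply, Function.comp_apply, hJ.2.2.2, ← adjoint_inner_right,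
      hW.adjoint_eq, hWW]

variable {F : Type*} [NormedAddCommGroup F] [InnerProductSpace ℂ F] {D : F → F}

theorem prodMap (hJ : IsConjugation J) (hD : IsConjugation D) :
    IsConjugation fun u : WithLp 2 (E × F) => WithLp.toLp 2 (J u.fst, D u.snd) := by
  refine ⟨fun x y => ?_, fun a x => ?_, fun x => ?_, fun x y => ?_⟩
  · simp only [WithLp.add_fst, WithLp.add_snd, hJ.1, hD.1, ← WithLp.toLp_add, Prod.mk_add_mk]
  · simp only [WithLp.smul_fst, WithLp.smul_snd, hJ.2.1, hD.2.1, ← WithLp.toLp_smul,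
      Prod.smul_mk]
  · simp only [WithLp.toLp_fst, WithLp.toLp_snd, hJ.2.2.1, hD.2.2.1]; rfl
  · simp [WithLp.prod_inner_apply, hJ.2.2.2, hD.2.2.2]

end IsConjugation

theorem IsComplexSymmetric.apply_eq_zero_of_apply_apply_eq_zero {E : Type*}
    [NormedAddCommGroup E] [InnerProductSpace ℂ E] [CompleteSpace E] {T : E →L[ℂ] E}
    (hT : IsComplexSymmetric T) (hadj : ∀ y, adjoint T (adjoint T y) = 0 → adjoint T y = 0)
    {x : E} (hx : T (T x) = 0) : T x = 0 := by
  obtain ⟨C, hC, hTC⟩ := hT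
  have h : adjoint T (adjoint T (C x)) = 0 := by
    apply hC.eq_zero_of_apply_eq_zero
    rw [← hx, hTC (T x), hTC x, hC.2.2.1]
  rw [hTC x, hadj _ h, hC.map_zero]

theorem isComplexSymmetric_of_isConjugation_comp {E : Type*} [NormedAddCommGroup E]
    [InnerProductSpace ℂ E] [CompleteSpace E] {J : E → E} (hJ : IsConjugation J)
    {W : E →L[ℂ] E} (hW : IsSelfAdjoint W) (hWW : ∀ x, W (W x) = x)
    (hWJ : ∀ x, W (J x) = J (W x)) {T : E →L[ℂ] E} (hTJ : ∀ x, T (J x) = J (T x))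
    (hTW : ∀ x, W (adjoint T (W x)) = T x) : IsComplexSymmetric T :=
  ⟨J ∘ W, hJ.comp_isSelfAdjoint hW hWW hWJ, fun x => by
    simp only [Function.comp_apply, ← hWJ, hTW, hTJ, hJ.2.2.1]⟩

section ProdL2

variable {𝕜 : Type*} [RCLike 𝕜] {E F : Type*} [NormedAddCommGroup E] [InnerProductSpace 𝕜 E]
  [CompleteSpace E] [NormedAddCommGroup F] [InnerProductSpace 𝕜 F] [CompleteSpace F]

theorem adjoint_apply_of_apply_eq_toLp {B : E →L[𝕜] E} {D : F →L[𝕜] F}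
    {T : WithLp 2 (E × F) →L[𝕜] WithLp 2 (E × F)}
    (hT : ∀ u, T u = WithLp.toLp 2 (B u.fst, D u.snd)) (u : WithLp 2 (E × F)) :
    adjoint T u = WithLp.toLp 2 (adjoint B u.fst, adjoint D u.snd) :=
  ext_inner_left 𝕜 fun v => by
    simp only [adjoint_inner_right, hT, WithLp.prod_inner_apply, WithLp.ofLp_fst,
      WithLp.ofLp_snd]

variable (V : E →L[𝕜] E)

def isometryReflection : WithLp 2 (E × E) →L[𝕜] WithLp 2 (E × E) :=
  (WithLp.prodContinuousLinearEquiv 2 𝕜 E E).symm.toContinuousLinearMap ∘L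
    (((1 - V ∘L adjoint V) ∘L WithLp.fstL 2 𝕜 E E + V ∘L WithLp.sndL 2 𝕜 E E).prod
      (adjoint V ∘L WithLp.fstL 2 𝕜 E E))

theorem isometryReflection_apply (u : WithLp 2 (E × E)) :
    isometryReflection V u =
      WithLp.toLp 2 (u.fst - V (adjoint V u.fst) + V u.snd, adjoint V u.fst) := by
  simp [isometryReflection]

theorem isSelfAdjoint_isometryReflection : IsSelfAdjoint (isometryReflection V) :=
  isSelfAdjoint_iff_isSymmetric.mpr fun u v => by
    have hVV (x y : E) : ⟪V (adjoint V x), y⟫_𝕜 = ⟪x, V (adjoint V y)⟫_𝕜 := by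
      rw [← adjoint_inner_right, adjoint_inner_left]
    simp only [ContinuousLinearMap.coe_coe, isometryReflection_apply, WithLp.prod_inner_apply,
      WithLp.ofLp_fst, WithLp.ofLp_snd, inner_add_left,
      inner_add_right, inner_sub_left, inner_sub_right, hVV, adjoint_inner_left,
      adjoint_inner_right]
    ring

variable {V}

theorem isometryReflection_isometryReflection (hV : ∀ x, adjoint V (V x) = x)
    (u : WithLp 2 (E × E)) : isometryReflection V (isometryReflection V u) = u := by
  simp only [isometryReflection_apply, WithLp.toLp_fst, WithLp.toLp_snd, map_add, map_sub, hV,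
    sub_self, zero_add, add_sub_cancel_right, sub_add_cancel]
  rfl

end ProdL2

section Reflection

variable {H : Type*} [NormedAddCommGroup H] [InnerProductSpace ℂ H] [CompleteSpace H]
  {J : H → H} {V : H →L[ℂ] H}

theorem isometryReflection_comm (hJ : IsConjugation J) (hVJ : ∀ x, V (J x) = J (V x))
    (u : WithLp 2 (H × H)) :
    isometryReflection V (WithLp.toLp 2 (J u.fst, J u.snd)) =
      WithLp.toLp 2 (J (isometryReflection V u).fst, J (isometryReflection V u).snd) := by
  simp only [isometryReflection_apply, WithLp.toLp_fst, WithLp.toLp_snd, hJ.1, hJ.map_sub,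
    hVJ, hJ.adjoint_apply_comm hVJ]

theorem isometryReflection_adjoint_isometryReflection (hV : ∀ x, adjoint V (V x) = x)
    {A : H →L[ℂ] H} {T : WithLp 2 (H × H) →L[ℂ] WithLp 2 (H × H)}
    (hT : ∀ u, T u = WithLp.toLp 2 (V (A (adjoint V u.fst)), adjoint A u.snd))
    (u : WithLp 2 (H × H)) :
    isometryReflection V (adjoint T (isometryReflection V u)) = T u := by
  have hT' := adjoint_apply_of_apply_eq_toLp (B := V ∘L A ∘L adjoint V) (D := adjoint A) hT
  simp only [adjoint_comp, adjoint_adjoint] at hT'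
  simp [isometryReflection_apply, hT', hT, hV]

theorem isComplexSymmetric_of_isometry (hJ : IsConjugation J) {A : H →L[ℂ] H}
    (hAJ : ∀ x, A (J x) = J (A x)) (hVJ : ∀ x, V (J x) = J (V x))
    (hV : ∀ x, adjoint V (V x) = x) {T : WithLp 2 (H × H) →L[ℂ] WithLp 2 (H × H)}
    (hT : ∀ u, T u = WithLp.toLp 2 (V (A (adjoint V u.fst)), adjoint A u.snd)) :
    IsComplexSymmetric T := by
  refine isComplexSymmetric_of_isConjugation_comp (hJ.prodMap hJ)
    (isSelfAdjoint_isometryReflection V) (isometryReflection_isometryReflection hV)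
    (isometryReflection_comm hJ hVJ) (fun u => ?_)
    (isometryReflection_adjoint_isometryReflection hV hT)
  simp only [hT, WithLp.toLp_fst, WithLp.toLp_snd, hVJ, hAJ, hJ.adjoint_apply_comm hVJ,
    hJ.adjoint_apply_comm hAJ]

theorem not_isComplexSymmetric_of_apply_eq_toLp_zero {A : H →L[ℂ] H}
    (hA : Function.Injective A) {v : H} (hv : adjoint A (adjoint A v) = 0)
    (hv' : adjoint A v ≠ 0) {L : WithLp 2 (H × H) →L[ℂ] WithLp 2 (H × H)}
    (hL : ∀ u, L u = WithLp.toLp 2 (0, adjoint A u.snd)) : ¬ IsComplexSymmetric L := by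
  intro hLsym
  have hLadj := adjoint_apply_of_apply_eq_toLp (B := 0) (D := adjoint A) hL
  simp only [map_zero, adjoint_adjoint, zero_apply] at hLadj
  have hker (y : WithLp 2 (H × H)) (hy : adjoint L (adjoint L y) = 0) : adjoint L y = 0 := by
    simp only [hLadj, WithLp.toLp_snd, WithLp.toLp_eq_zero, Prod.mk_eq_zero] at hy ⊢
    exact ⟨trivial, hA (hy.2.trans (map_zero A).symm)⟩
  have h := hLsym.apply_eq_zero_of_apply_apply_eq_zero hker (x := WithLp.toLp 2 (0, v))
    (by simp [hL, hv])
  simp [hL] at h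
  exact hv' h

end Reflection

theorem ContinuousLinearMap.adjoint_pow {𝕜 E : Type*} [RCLike 𝕜] [NormedAddCommGroup E]
    [InnerProductSpace 𝕜 E] [CompleteSpace E] (A : E →L[𝕜] E) (k : ℕ) :
    adjoint (A ^ k) = adjoint A ^ k := by
  rw [← star_eq_adjoint, star_pow, star_eq_adjoint]

theorem lp.isConjugation_star {ι : Type*} :
    IsConjugation (star : lp (fun _ : ι => ℂ) 2 → lp (fun _ : ι => ℂ) 2) := by
  refine ⟨star_add, fun a x => ?_, star_star, fun x y => ?_⟩
  · rw [star_smul, Complex.star_def]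
  · simp only [lp.inner_eq_tsum, lp.star_apply, RCLike.inner_apply]
    exact tsum_congr fun i => by
      rw [Complex.star_def, Complex.conj_conj, mul_comm]

theorem inner_e_left (x : ellTwo) (i : ℕ) : ⟪e i, x⟫_ℂ = x i := by
  rw [e, lp.inner_single_left, RCLike.inner_apply, map_one, mul_one]

theorem e_ne_zero (n : ℕ) : e n ≠ 0 := fun h => by
  simpa [e] using congrArg (fun x : ellTwo => x n) h

section Shift

variable {S : ellTwo →L[ℂ] ellTwo} (hS : ∀ n, S (e n) = e (n + 1))
include hS

theorem adjoint_shift_apply (y : ellTwo) (i : ℕ) : adjoint S y i = y (i + 1) := by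
  rw [← inner_e_left, adjoint_inner_right, hS, inner_e_left]

theorem adjoint_shift_e_zero : adjoint S (e 0) = 0 :=
  lp.ext <| funext fun i => by simp [adjoint_shift_apply hS, e]

theorem adjoint_shift_e_succ (i : ℕ) : adjoint S (e (i + 1)) = e i :=
  lp.ext <| funext fun j => by simp [adjoint_shift_apply hS, e, Pi.single_apply]

theorem shift_apply_zero (x : ellTwo) : S x 0 = 0 := by
  rw [← inner_e_left, ← adjoint_inner_left, adjoint_shift_e_zero hS, inner_zero_left]

theorem shift_apply_succ (x : ellTwo) (i : ℕ) : S x (i + 1) = x i := by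
  rw [← inner_e_left, ← adjoint_inner_left, adjoint_shift_e_succ hS, inner_e_left]

theorem adjoint_shift_shift (x : ellTwo) : adjoint S (S x) = x :=
  lp.ext <| funext fun i => by rw [adjoint_shift_apply hS, shift_apply_succ hS]

theorem shift_injective : Function.Injective S :=
  Function.LeftInverse.injective (g := adjoint S) (adjoint_shift_shift hS)

theorem shift_star (x : ellTwo) : S (star x) = star (S x) :=
  lp.ext <| funext fun i => by
    cases i <;> simp [lp.star_apply, shift_apply_zero hS, shift_apply_succ hS]

theorem iterate_shift_apply (k : ℕ) (x : ellTwo) (i : ℕ) :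
    (S^[k] x) i = if k ≤ i then x (i - k) else 0 := by
  induction k generalizing i with
  | zero => simp
  | succ k ih =>
    rw [Function.iterate_succ_apply']
    cases i with
    | zero => simp [shift_apply_zero hS]
    | succ i => simp [shift_apply_succ hS, ih]

theorem iterate_adjoint_shift_apply (k : ℕ) (y : ellTwo) (i : ℕ) :
    ((adjoint S)^[k] y) i = y (i + k) := by
  induction k generalizing i with
  | zero => rfl
  | succ k ih =>
    rw [Function.iterate_succ_apply', adjoint_shift_apply hS, ih, add_right_comm, add_assoc]

theorem pow_shift_star (k : ℕ) (x : ellTwo) : (S ^ k) (star x) = star ((S ^ k) x) := by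
  rw [FunLike.coe_pow_eq_iterate]
  exact Function.Commute.iterate_left (shift_star hS) k x

theorem adjoint_pow_shift_pow_shift (k : ℕ) (x : ellTwo) : adjoint (S ^ k) ((S ^ k) x) = x := by
  rw [ContinuousLinearMap.adjoint_pow, FunLike.coe_pow_eq_iterate, FunLike.coe_pow_eq_iterate]
  exact Function.LeftInverse.iterate (g := adjoint S) (adjoint_shift_shift hS) k x

end Shift

section Projection

variable {P : ℕ → ellTwo →L[ℂ] ellTwo} (hP : ∀ n x i, P n x i = if n ≤ i then x i else 0)
include hP

theorem tendsto_proj_zero (x : ellTwo) : Tendsto (fun n => P n x) atTop (𝓝 0) := by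
  have hP' (n : ℕ) : P n x = x - ∑ i ∈ Finset.range n, lp.single 2 i (x i) :=
    lp.ext <| funext fun j => by
      rw [hP, lp.coeFn_sub, Pi.sub_apply, lp.coeFn_sum, Finset.sum_apply]
      rcases lt_or_ge j n with h | h
      · simp [Pi.single_apply, h, h.not_ge]
      · simp [Pi.single_apply, h, h.not_gt]
  simpa [hP'] using
    (tendsto_const_nhds (x := x)).sub (lp.hasSum_single (by norm_num) x).tendsto_sum_nat

-- `n - 1` truncates at `n = 0`, harmlessly, since `P 0 S = P 1 S = S`.
theorem proj_shift_eq {S : ellTwo →L[ℂ] ellTwo} (hS : ∀ n, S (e n) = e (n + 1))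
    (n : ℕ) (x : ellTwo) :
    P n (S x) = (S ^ (n - 1)) (S (adjoint (S ^ (n - 1)) x)) := by
  have hS1 := iterate_shift_apply hS 1
  simp only [Function.iterate_one] at hS1
  refine lp.ext <| funext fun i => ?_
  rw [hP, ContinuousLinearMap.adjoint_pow, FunLike.coe_pow_eq_iterate,
    FunLike.coe_pow_eq_iterate, iterate_shift_apply hS, hS1, hS1, iterate_adjoint_shift_apply hS]
  split_ifs <;> first | rfl | omega | exact congrArg x (by omega)

end Projection

/-- The set of complex symmetric operators is not SOT-closed: the operators
`Tₙ = PₙS ⊕ S*` are complex symmetric, converge to `0 ⊕ S*` in the strong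
operator topology, but `0 ⊕ S*` is not complex symmetric. -/
theorem complexSymmetric_not_SOT_closed
    (S : ellTwo →L[ℂ] ellTwo) (hS : ∀ n, S (e n) = e (n + 1))
    (P : ℕ → (ellTwo →L[ℂ] ellTwo))
    (hP : ∀ n (x : ellTwo) (i : ℕ), (P n x) i = if n ≤ i then x i else 0)
    (T : ℕ → (WithLp 2 (ellTwo × ellTwo) →L[ℂ] WithLp 2 (ellTwo × ellTwo)))
    (hT : ∀ n x, T n x = (WithLp.equiv 2 (ellTwo × ellTwo)).symm
      (P n (S ((WithLp.equiv 2 (ellTwo × ellTwo)) x).1),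
       adjoint S ((WithLp.equiv 2 (ellTwo × ellTwo)) x).2))
    (L : WithLp 2 (ellTwo × ellTwo) →L[ℂ] WithLp 2 (ellTwo × ellTwo))
    (hL : ∀ x, L x = (WithLp.equiv 2 (ellTwo × ellTwo)).symm
      (0, adjoint S ((WithLp.equiv 2 (ellTwo × ellTwo)) x).2)) :
    (∀ n, IsComplexSymmetric (T n)) ∧
    (∀ x, Tendsto (fun n => T n x) atTop (𝓝 (L x))) ∧
    ¬ IsComplexSymmetric L := by
  refine ⟨fun n => ?_, fun x => ?_, ?_⟩
  · refine isComplexSymmetric_of_isometry lp.isConjugation_star (shift_star hS)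
      (pow_shift_star hS (n - 1)) (adjoint_pow_shift_pow_shift hS (n - 1)) fun u => ?_
    rw [hT, ← proj_shift_eq hP hS]
    rfl
  · have hcont : Continuous fun y : ellTwo => WithLp.toLp 2 (y, adjoint S x.snd) :=
      (WithLp.prod_continuous_toLp 2 _ _).comp (continuous_id.prodMk continuous_const)
    simp only [hT, hL, WithLp.equiv_symm_apply]
    exact (hcont.tendsto 0).comp (tendsto_proj_zero hP (S x.fst))
  · exact not_isComplexSymmetric_of_apply_eq_toLp_zero (shift_injective hS) (v := e 1)
      (by rw [adjoint_shift_e_succ hS, adjoint_shift_e_zero hS])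
      (by rw [adjoint_shift_e_succ hS]; exact e_ne_zero 0) hL
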